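/- Let S be a Hausdorff countably compact topological semigroup. Then the inversion map inv : H(S) → H(S) is sequentially continuous: for every sequence (x_n) in H(S) converging to x ∈ H(S), the sequence (x_n⁻¹) converges to x⁻¹. -/

import Mathlib

open Filter Topology

variable {S : Type*}

/-- `spow x n` is `x ^ n` for `n ≥ 1` in a semigroup (with junk value `x` at `0`). -/
def spow {S : Type*} [Mul S] (x : S) : ℕ → S
  | 0 => x
  | 1 => x
  | n + 2 => spow x (n + 1) * x

/-- An element of a topological semigroup is topologically periodic if every open
neighbourhood of `x` contains `x ^ n` for some `n ≥ 2`. -/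
def TopPeriodic {S : Type*} [Mul S] [TopologicalSpace S] (x : S) : Prop :=
  ∀ U : Set S, IsOpen U → x ∈ U → ∃ n : ℕ, 2 ≤ n ∧ spow x n ∈ U

/-- The Clifford part `H(S)` of a semigroup: the union of all maximal subgroups. -/
def HSet (S : Type*) [Mul S] : Set S :=
  {x | ∃ y, x * y = y * x ∧ x * y * x = x ∧ y * x * y = y}

/-- The maximal subgroup `H(e)` of a semigroup with identity the idempotent `e`. -/
def Hgrp (S : Type*) [Mul S] (e : S) : Set S :=
  {x | ∃ y, x * y = e ∧ y * x = e ∧ x * e = x ∧ e * x = x ∧ y * e = y ∧ e * y = y}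

/-- `inv` is the inversion map on the Clifford part `H(S)`: it sends each element of a
maximal subgroup to its (unique) commuting inverse. -/
def IsInvMap (S : Type*) [Mul S] (inv : S → S) : Prop :=
  ∀ x ∈ HSet S, x * inv x = inv x * x ∧ x * inv x * x = x ∧ inv x * x * inv x = inv x

/-- A topological space is countably compact if every countable open cover admits a
finite subcover. -/
def CountablyCompactSpace' (X : Type*) [TopologicalSpace X] : Prop :=
  ∀ U : ℕ → Set X, (∀ n, IsOpen (U n)) → (⋃ n, U n) = Set.univ →
    ∃ F : Finset ℕ, (⋃ n ∈ F, U n) = Set.univ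

/-- A subset of a topological space is countably compact (as a subspace) if every
countable cover by open sets of the ambient space admits a finite subcover. -/
def CountablyCompactIn {X : Type*} [TopologicalSpace X] (A : Set X) : Prop :=
  ∀ U : ℕ → Set X, (∀ n, IsOpen (U n)) → A ⊆ ⋃ n, U n →
    ∃ F : Finset ℕ, A ⊆ ⋃ n ∈ F, U n

/-- A topological space is pseudocompact if every continuous real-valued function on it
is bounded. -/
def Pseudocompact (X : Type*) [TopologicalSpace X] : Prop :=
  ∀ f : X → ℝ, Continuous f → ∃ M : ℝ, ∀ x, |f x| ≤ M

/-!
The commuting-inverse relation `a * b = b * a ∧ a * b * a = a ∧ b * a * b = b` is closed in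
`S × S` and determines `b` from `a`. If `uₙ → x` and `z` is a cluster point of `uₙ⁻¹`, then
`(x, z)` is a cluster point of the pairs `(uₙ, uₙ⁻¹)`, so `z = x⁻¹`. In a countably compact space
a sequence whose only cluster point is `y` converges to `y`.
-/

def IsCommInverse [Mul S] (a b : S) : Prop :=
  a * b = b * a ∧ a * b * a = a ∧ b * a * b = b

theorem IsCommInverse.eq [Semigroup S] {a b c : S} (hb : IsCommInverse a b)
    (hc : IsCommInverse a c) : b = c := by
  obtain ⟨hab, haba, hbab⟩ := hb
  obtain ⟨hac, haca, hcac⟩ := hc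
  have hab_ac : a * b = a * c := by
    calc a * b = (a * c * a) * b := by rw [haca]
      _ = (a * c) * (a * b) := by simp only [mul_assoc]
      _ = (c * a) * (b * a) := by rw [hac, hab]
      _ = c * (a * b * a) := by simp only [mul_assoc]
      _ = a * c := by rw [haba, hac]
  calc b = (b * a) * b := hbab.symm
    _ = (a * c) * b := by rw [← hab, hab_ac]
    _ = c * (a * b) := by rw [hac, mul_assoc]
    _ = (c * a) * c := by rw [hab_ac, mul_assoc]
    _ = c := hcac

theorem isClosed_setOf_isCommInverse [Mul S] [TopologicalSpace S] [ContinuousMul S]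
    [T2Space S] : IsClosed {p : S × S | IsCommInverse p.1 p.2} := by
  simp only [IsCommInverse, Set.ofPred_and]
  refine (isClosed_eq ?_ ?_).inter ((isClosed_eq ?_ ?_).inter (isClosed_eq ?_ ?_)) <;> fun_prop

section CountablyCompact

variable {X Y α : Type*} [TopologicalSpace X] [TopologicalSpace Y]

theorem CountablyCompactSpace'.countablyCompactSpace (h : CountablyCompactSpace' X) :
    CountablyCompactSpace X := by
  refine ⟨isCountablyCompact_iff_countable_open_cover.2 fun U hUo hcov => ?_⟩
  simpa only [Set.univ_subset_iff] using h U hUo (Set.univ_subset_iff.1 hcov)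

theorem CountablyCompactSpace.tendsto_nhds_of_unique_mapClusterPt [CountablyCompactSpace X]
    {l : Filter α} [l.IsCountablyGenerated] {f : α → X} {y : X}
    (h : ∀ z, MapClusterPt z l f → z = y) : Tendsto f l (𝓝 y) := by
  by_contra hf
  obtain ⟨U, hU, hfU⟩ := not_tendsto_iff_exists_frequently_notMem.1 hf
  have := frequently_iff_neBot.1 hfU
  obtain ⟨z, -, hz⟩ : ∃ z ∈ Set.univ, MapClusterPt z (l ⊓ 𝓟 {a | f a ∉ U}) f :=
    CountablyCompactSpace.isCountablyCompact_univ (principal_univ ▸ le_top)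
  have hzy : z = y := h z (hz.mono inf_le_left)
  subst hzy
  have hnotU : ∀ᶠ a in l ⊓ 𝓟 {a | f a ∉ U}, f a ∉ U := mem_inf_of_right (mem_principal_self _)
  obtain ⟨a, haU, ha⟩ := ((hz.frequently hU).and_eventually hnotU).exists
  exact ha haU

theorem Filter.Tendsto.mapClusterPt_prodMk {l : Filter α} {u : α → X} {v : α → Y} {x : X}
    {y : Y} (hu : Tendsto u l (𝓝 x)) (hv : MapClusterPt y l v) :
    MapClusterPt (x, y) l fun a => (u a, v a) := by
  rw [((𝓝 x).basis_sets.prod_nhds (𝓝 y).basis_sets).mapClusterPt_iff_frequently]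
  rintro ⟨s, t⟩ ⟨hs, ht⟩
  exact (mapClusterPt_iff_frequently.1 hv t ht).and_eventually (hu hs) |>.mono
    fun _ h => ⟨h.2, h.1⟩

end CountablyCompact

theorem stmt12 [Semigroup S] [TopologicalSpace S] [ContinuousMul S] [T2Space S]
    (hcc : CountablyCompactSpace' S) (inv : S → S) (hinv : IsInvMap S inv)
    (u : ℕ → S) (hu : ∀ n, u n ∈ HSet S) (x : S) (hx : x ∈ HSet S)
    (hlim : Tendsto u atTop (𝓝 x)) :
    Tendsto (fun n => inv (u n)) atTop (𝓝 (inv x)) := by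
  have := hcc.countablyCompactSpace
  refine CountablyCompactSpace.tendsto_nhds_of_unique_mapClusterPt fun z hz => ?_
  have hxz : IsCommInverse x z :=
    isClosed_setOf_isCommInverse.mem_of_mapClusterPt (hlim.mapClusterPt_prodMk hz)
      (.of_forall fun n => hinv _ (hu n))
  exact hxz.eq (hinv x hx)
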